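/- Let q = (√5 − 1)/2 and let f : ℝ → ℝ be a solution of Schilling's problem for q. Then f(0) = 0, f(1) = 0, f(−1) = 0, f(q) = 0 and f(−q) = 0. -/

import Mathlib

/-!
Everything is read off the functional equation at finitely many points, using that `f` vanishes
beyond `Q = q/(1-q)`. At `x = Q/q` the equation reads `4q f(Q) = f(Q)`, so `f(Q) = 0` once `q ≠ 1/4`.
For the golden `q` one has `Q = 1 + q` and `qQ = 1`, and the equation at `x = Q`, `1`, `0`
(together with its mirror image under `x ↦ -x`) becomes a linear system in `f 0`, `f (±1)`,
`f (±q)` whose determinant is a nonzero multiple of `152q - 94`.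
-/

structure IsSchillingSolution (q : ℝ) (f : ℝ → ℝ) : Prop where
  functional_eq : ∀ x : ℝ, f (q * x) = (1 / (4 * q)) * (f (x - 1) + f (x + 1) + 2 * f x)
  eq_zero_of_gt : ∀ x : ℝ, |x| > q / (1 - q) → f x = 0

namespace IsSchillingSolution

variable {q : ℝ} {f : ℝ → ℝ}

theorem comp_neg (hf : IsSchillingSolution q f) : IsSchillingSolution q (fun x ↦ f (-x)) where
  functional_eq x := by
    rw [show -(x - 1) = -x + 1 by ring, show -(x + 1) = -x - 1 by ring, ← mul_neg,
      hf.functional_eq]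
    ring
  eq_zero_of_gt x hx := hf.eq_zero_of_gt (-x) (by rwa [abs_neg])

theorem four_mul_mul_apply_mul (hf : IsSchillingSolution q f) (hq : q ≠ 0) (x : ℝ) :
    4 * q * f (q * x) = f (x - 1) + f (x + 1) + 2 * f x := by
  rw [hf.functional_eq x]
  field_simp

theorem apply_eq_zero_of_lt (hf : IsSchillingSolution q f) {x : ℝ} (hx : q / (1 - q) < x) :
    f x = 0 :=
  hf.eq_zero_of_gt x (hx.trans_le (le_abs_self x))

theorem apply_div_one_sub_eq_zero (hf : IsSchillingSolution q f) (hq₀ : 0 < q) (hq₁ : q < 1)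
    (hq : q ≠ 1 / 4) : f (q / (1 - q)) = 0 := by
  have h1q : 1 - q ≠ 0 := by linarith
  have h := hf.four_mul_mul_apply_mul hq₀.ne' (1 / (1 - q))
  have hx : q * (1 / (1 - q)) = q / (1 - q) := mul_one_div q (1 - q)
  have hx₁ : 1 / (1 - q) - 1 = q / (1 - q) := by field_simp; ring
  rw [hx, hx₁, hf.apply_eq_zero_of_lt (x := 1 / (1 - q) + 1) (by rw [← hx₁]; linarith),
    hf.apply_eq_zero_of_lt (x := 1 / (1 - q)) (by rw [← hx₁]; linarith)] at h
  have hfix : (4 * q - 1) * f (q / (1 - q)) = 0 := by linear_combination h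
  exact (mul_eq_zero.mp hfix).resolve_left fun h' ↦ hq (by linarith)

end IsSchillingSolution

section Golden

variable {q : ℝ}

theorem div_one_sub_eq_one_add_of_sq_add (hq : q ^ 2 + q = 1) (hq₁ : q ≠ 1) :
    q / (1 - q) = 1 + q := by
  rw [div_eq_iff (sub_ne_zero.mpr hq₁.symm)]
  linear_combination hq

variable {f : ℝ → ℝ} (hq₀ : 0 < q) (hq : q ^ 2 + q = 1)
include hq₀ hq

namespace IsSchillingSolution

theorem apply_self_eq (hf : IsSchillingSolution q f) : f q = 4 * q * f 1 := by
  have hq₁ : q < 1 := by nlinarith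
  have hQ := div_one_sub_eq_one_add_of_sq_add hq hq₁.ne
  have hfQ := hf.apply_div_one_sub_eq_zero hq₀ hq₁ (by nlinarith)
  rw [hQ] at hfQ
  have h := hf.four_mul_mul_apply_mul hq₀.ne' (1 + q)
  rw [show q * (1 + q) = 1 by linear_combination hq, add_sub_cancel_left, hfQ,
    hf.apply_eq_zero_of_lt (x := 1 + q + 1) (by rw [hQ]; linarith)] at h
  linarith

theorem apply_zero_eq (hf : IsSchillingSolution q f) : f 0 = (14 - 16 * q) * f 1 := by
  have hq₁ : q < 1 := by nlinarith
  have hQ := div_one_sub_eq_one_add_of_sq_add hq hq₁.ne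
  have h := hf.four_mul_mul_apply_mul hq₀.ne' 1
  rw [mul_one, sub_self, hf.apply_self_eq hq₀ hq,
    hf.apply_eq_zero_of_lt (x := 1 + 1) (by rw [hQ]; linarith)] at h
  linear_combination -h + 16 * f 1 * hq

theorem apply_zero_eq_zero (hf : IsSchillingSolution q f) : f 0 = 0 := by
  have h := hf.four_mul_mul_apply_mul hq₀.ne' 0
  have h₁ := hf.apply_zero_eq hq₀ hq
  have hneg := hf.comp_neg.apply_zero_eq hq₀ hq
  simp only [mul_zero, zero_sub, zero_add, neg_zero] at h hneg
  have hdet : (152 * q - 94) * f 0 = 0 := by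
    linear_combination (14 - 16 * q) * h - h₁ - hneg + 64 * f 0 * hq
  exact (mul_eq_zero.mp hdet).resolve_left (by nlinarith)

theorem apply_one_eq_zero (hf : IsSchillingSolution q f) : f 1 = 0 := by
  have h := hf.apply_zero_eq hq₀ hq
  rw [hf.apply_zero_eq_zero hq₀ hq] at h
  exact (mul_eq_zero.mp h.symm).resolve_left (by nlinarith)

theorem apply_self_eq_zero (hf : IsSchillingSolution q f) : f q = 0 := by
  rw [hf.apply_self_eq hq₀ hq, hf.apply_one_eq_zero hq₀ hq, mul_zero]

end IsSchillingSolution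

end Golden

theorem schilling_golden_values (q : ℝ) (hq : q = (Real.sqrt 5 - 1) / 2)
    (f : ℝ → ℝ)
    (hfe : ∀ x : ℝ, f (q * x) = (1 / (4 * q)) * (f (x - 1) + f (x + 1) + 2 * f x))
    (hfv : ∀ x : ℝ, |x| > q / (1 - q) → f x = 0) :
    f 0 = 0 ∧ f 1 = 0 ∧ f (-1) = 0 ∧ f q = 0 ∧ f (-q) = 0 := by
  have hψ : q = -Real.goldenConj := by rw [hq, Real.goldenConj]; ring
  have hq₀ : 0 < q := by rw [hψ]; exact neg_pos.mpr Real.goldenConj_neg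
  have hgold : q ^ 2 + q = 1 := by rw [hψ]; linear_combination Real.goldenConj_sq
  have hf : IsSchillingSolution q f := ⟨hfe, hfv⟩
  have hneg_one := hf.comp_neg.apply_one_eq_zero hq₀ hgold
  have hneg_self := hf.comp_neg.apply_self_eq_zero hq₀ hgold
  exact ⟨hf.apply_zero_eq_zero hq₀ hgold, hf.apply_one_eq_zero hq₀ hgold, hneg_one,
    hf.apply_self_eq_zero hq₀ hgold, hneg_self⟩
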